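/- arXiv:1809.09416 — 7 statements merged into one kernel-verified Lean document; each statement's English description precedes it below -/
import Mathlib

section
/- For real numbers a, b with a ≥ |b| > 0, the integral ∫₀^π log(a + b cos θ) dθ equals π log((a + √(a² − b²))/2). -/
/-!
Since `r = (a + √(a² - b²)) / 2` is a root of `r² - a r + b² / 4`, on the circle of radius `r`
one has `a + b cos θ = |r e^{iθ} + b / 2|² / r`. As `|b| / 2 ≤ r`, the point `-b / 2` lies in the
closed disc, so `log |z + b / 2|` has mean `log r` over the circle (the circle average of
`log |z - u|` is `log⁺ |u|` on the unit circle). Hence `log (a + b cos θ)` has mean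
`2 log r - log r = log r` over `[0, 2π]`, and the symmetry `θ ↦ 2π - θ` halves the integral.
-/

open Real MeasureTheory Metric Filter intervalIntegral

theorem integral_comp_cos_zero_two_pi {E : Type*} [NormedAddCommGroup E] [NormedSpace ℝ E]
    {g : ℝ → E} (hg : IntervalIntegrable (fun θ ↦ g (cos θ)) volume 0 (2 * π)) :
    ∫ θ in 0..2 * π, g (cos θ) = (2 : ℝ) • ∫ θ in 0..π, g (cos θ) := by
  have hπ : π ∈ Set.uIcc 0 (2 * π) := Set.mem_uIcc.2 (.inl ⟨pi_pos.le, by linarith [pi_pos]⟩)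
  have hreflect : ∫ θ in 0..π, g (cos θ) = ∫ θ in π..2 * π, g (cos θ) := by
    have := integral_comp_sub_left (fun θ ↦ g (cos θ)) (2 * π) (a := 0) (b := π)
    simp only [cos_two_pi_sub, sub_zero, show 2 * π - π = π by ring] at this
    exact this
  rw [← integral_add_adjacent_intervals (hg.mono_set (Set.uIcc_subset_uIcc_left hπ))
    (hg.mono_set (Set.uIcc_subset_uIcc_right hπ)), ← hreflect, two_smul]

lemma circleIntegrable_log_norm_sub_const_sq_div {u c : ℂ} (R r : ℝ) :
    CircleIntegrable (fun z ↦ log (‖z - u‖ ^ 2 / r)) c R := by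
  have hf : MeromorphicOn (fun z ↦ (z - u) ^ 2 / (r : ℂ)) (sphere c |R|) := fun z _ ↦ by fun_prop
  convert hf.circleIntegrable_log_norm using 2 with z
  rw [norm_div, norm_pow, Complex.norm_real, norm_eq_abs, ← log_abs, abs_div,
    abs_of_nonneg (by positivity)]

theorem circleAverage_log_norm_sub_const_sq_div {c u : ℂ} {R : ℝ} (hR : R ≠ 0)
    (hu : u ∈ closedBall c |R|) :
    circleAverage (fun z ↦ log (‖z - u‖ ^ 2 / R)) c R = log R := by
  have hlog : CircleIntegrable (fun z ↦ (2 : ℝ) • log ‖z - u‖) c R :=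
    (circleIntegrable_log_norm_sub_const R).const_smul
  calc circleAverage (fun z ↦ log (‖z - u‖ ^ 2 / R)) c R
      = circleAverage (fun z ↦ (2 : ℝ) • log ‖z - u‖ - log R) c R := by
        refine circleAverage_congr_codiscreteWithin ?_ hR
        filter_upwards [compl_singleton_mem_codiscreteWithin u] with z hz
        have hz : ‖z - u‖ ≠ 0 := by simpa [sub_eq_zero] using hz
        rw [log_div (pow_ne_zero 2 hz) hR, log_pow, Nat.cast_ofNat, smul_eq_mul]
    _ = 2 * log R - log R := by
        rw [circleAverage_fun_sub hlog (circleIntegrable_const _ c R), circleAverage_const,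
          circleAverage_fun_smul, circleAverage_log_norm_sub_const_of_mem_closedBall hu,
          smul_eq_mul]
    _ = log R := by ring

lemma add_mul_cos_eq_norm_sq_circleMap_div {a b r : ℝ} (hr : r ≠ 0)
    (hroot : r ^ 2 - a * r + b ^ 2 / 4 = 0) (θ : ℝ) :
    a + b * cos θ = ‖circleMap 0 r θ - (-(b / 2) : ℂ)‖ ^ 2 / r := by
  rw [← Complex.normSq_eq_norm_sq, Complex.normSq_apply]
  simp only [circleMap_zero, sub_neg_eq_add, Complex.add_re, Complex.add_im,
    Complex.re_ofReal_mul, Complex.im_ofReal_mul, Complex.exp_ofReal_mul_I_re,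
    Complex.exp_ofReal_mul_I_im, Complex.div_ofNat_re, Complex.div_ofNat_im, Complex.ofReal_re,
    Complex.ofReal_im]
  field_simp
  linear_combination -4 * hroot - 4 * r ^ 2 * sin_sq_add_cos_sq θ

theorem stmt0 (a b : ℝ) (h1 : a ≥ |b|) (h2 : |b| > 0) :
    ∫ θ in (0:ℝ)..π, Real.log (a + b * Real.cos θ)
      = π * Real.log ((a + Real.sqrt (a ^ 2 - b ^ 2)) / 2) := by
  set r := (a + √(a ^ 2 - b ^ 2)) / 2 with hr_def
  have hdisc : 0 ≤ a ^ 2 - b ^ 2 := sub_nonneg.2 (sq_le_sq.2 (h1.trans (le_abs_self a)))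
  have hr : 0 < r := by have := h2.trans_le h1; positivity
  have hroot : r ^ 2 - a * r + b ^ 2 / 4 = 0 := by
    linear_combination (sq_sqrt hdisc) / 4
  have hu : (-(b / 2) : ℂ) ∈ closedBall 0 |r| := by
    have hnorm : ‖(-(b / 2) : ℂ)‖ = |b| / 2 := by simp
    rw [mem_closedBall, dist_zero_right, abs_of_pos hr, hnorm, hr_def]
    linarith [sqrt_nonneg (a ^ 2 - b ^ 2)]
  have hcircle : (fun θ ↦ log (a + b * cos θ))
      = fun θ ↦ log (‖circleMap 0 r θ - (-(b / 2) : ℂ)‖ ^ 2 / r) := by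
    simp_rw [← add_mul_cos_eq_norm_sq_circleMap_div hr.ne' hroot]
  have hint : IntervalIntegrable (fun θ ↦ log (a + b * cos θ)) volume 0 (2 * π) := by
    rw [hcircle]; exact circleIntegrable_log_norm_sub_const_sq_div r r
  have hmean := circleAverage_log_norm_sub_const_sq_div hr.ne' hu
  rw [circleAverage_def, ← hcircle, integral_comp_cos_zero_two_pi (g := fun x ↦ log (a + b * x))
    hint, smul_eq_mul, smul_eq_mul] at hmean
  rw [← hmean]
  field_simp
end

section
/- Let z₁, z₂ ∈ (−1,1) with z₁ ≠ z₂. For x(θ₁) = (√(1−z₁²)cos θ₁, √(1−z₁²)sin θ₁, z₁) and y(θ₂) = (√(1−z₂²)cos θ₂, √(1−z₂²)sin θ₂, z₂), the average (1/(4π²)) ∫₀^{2π}∫₀^{2π} −log‖x(θ₁) − y(θ₂)‖ dθ₁ dθ₂ equals −(1/2) log(1 − z₁z₂ + |z₁ − z₂|). -/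
/-!
Both circles lie on the unit sphere, so ‖x θ₁ - y θ₂‖² = A - B cos (θ₂ - θ₁) with
A = 2 (1 - z₁ z₂), B = 2 √(1 - z₁²) √(1 - z₂²) and A² - B² = 4 (z₁ - z₂)².
Writing A - B cos u = |p e^{iu} - q|² with |q| ≤ |p|, the mean of log |· - q| over the circle of
radius |p| is log |p| (the logarithm is harmonic inside), and p² = (A + √(A² - B²)) / 2.
-/

open Real

lemma norm_circleMap_zero_sub_ofReal_sq (p q u : ℝ) :
    ‖circleMap 0 p u - q‖ ^ 2 = p ^ 2 + q ^ 2 - 2 * p * q * cos u := by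
  rw [Complex.sq_norm, Complex.normSq_apply, circleMap_zero]
  simp only [Complex.sub_re, Complex.sub_im, Complex.mul_re, Complex.mul_im,
    Complex.ofReal_re, Complex.ofReal_im, Complex.exp_ofReal_mul_I_re,
    Complex.exp_ofReal_mul_I_im]
  linear_combination p ^ 2 * sin_sq_add_cos_sq u

lemma integral_log_sq_add_sq_sub_mul_cos_add {p q : ℝ} (h : |q| ≤ |p|) (η : ℝ) :
    ∫ u in 0..2 * π, log (p ^ 2 + q ^ 2 - 2 * p * q * cos (u + η)) = 2 * π * log (p ^ 2) := by
  have hq : (q : ℂ) ∈ Metric.closedBall 0 |p| := by simpa using h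
  have havg := circleAverage_log_norm_sub_const_of_mem_closedBall hq
  rw [circleAverage_eq_integral_add η, smul_eq_mul, inv_mul_eq_iff_eq_mul₀ (by positivity)] at havg
  simp only [← norm_circleMap_zero_sub_ofReal_sq, log_pow, intervalIntegral.integral_const_mul, havg]
  push_cast
  ring

theorem integral_log_sub_mul_cos_add {A B : ℝ} (h : |B| ≤ A) (η : ℝ) :
    ∫ u in 0..2 * π, log (A - B * cos (u + η)) = 2 * π * log ((A + √(A ^ 2 - B ^ 2)) / 2) := by
  obtain ⟨hBA, hAB⟩ := abs_le.mp h
  set s := √(A + B)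
  set t := √(A - B)
  have hs : s ^ 2 = A + B := sq_sqrt (by linarith)
  have ht : t ^ 2 = A - B := sq_sqrt (by linarith)
  have hst : √(A ^ 2 - B ^ 2) = s * t := by
    rw [← sqrt_mul (by linarith)]
    ring_nf
  have hqp : |(s - t) / 2| ≤ |(s + t) / 2| := by
    rw [abs_of_nonneg (by positivity : 0 ≤ (s + t) / 2), abs_le]
    constructor <;> linarith [sqrt_nonneg (A + B), sqrt_nonneg (A - B)]
  have hA : ((s + t) / 2) ^ 2 + ((s - t) / 2) ^ 2 = A := by
    linear_combination (1 / 2) * hs + (1 / 2) * ht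
  have hB : 2 * ((s + t) / 2) * ((s - t) / 2) = B := by
    linear_combination (1 / 2) * hs - (1 / 2) * ht
  have hp : ((s + t) / 2) ^ 2 = (A + √(A ^ 2 - B ^ 2)) / 2 := by
    rw [hst]; linear_combination (1 / 4) * hs + (1 / 4) * ht
  have key := integral_log_sq_add_sq_sub_mul_cos_add hqp η
  rwa [hA, hB, hp] at key

lemma norm_sub_sq_of_cylindrical {v w : EuclideanSpace ℝ (Fin 3)} {a b c d s t : ℝ}
    (hv : v.ofLp = ![a * cos s, a * sin s, c]) (hw : w.ofLp = ![b * cos t, b * sin t, d]) :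
    ‖v - w‖ ^ 2 = a ^ 2 + b ^ 2 - 2 * a * b * cos (t - s) + (c - d) ^ 2 := by
  rw [EuclideanSpace.norm_sq_eq, Fin.sum_univ_three]
  simp only [PiLp.sub_apply, hv, hw, Matrix.cons_val, norm_eq_abs, sq_abs, cos_sub]
  linear_combination a ^ 2 * sin_sq_add_cos_sq s + b ^ 2 * sin_sq_add_cos_sq t

theorem stmt1_general (z₁ z₂ : ℝ) (h₁ : z₁ ∈ Set.Ioo (-1:ℝ) 1) (h₂ : z₂ ∈ Set.Ioo (-1:ℝ) 1)
    (x y : ℝ → EuclideanSpace ℝ (Fin 3))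
    (hx : ∀ θ, x θ = ![Real.sqrt (1 - z₁ ^ 2) * Real.cos θ,
      Real.sqrt (1 - z₁ ^ 2) * Real.sin θ, z₁])
    (hy : ∀ θ, y θ = ![Real.sqrt (1 - z₂ ^ 2) * Real.cos θ,
      Real.sqrt (1 - z₂ ^ 2) * Real.sin θ, z₂]) :
    (1 / (4 * π ^ 2)) *
      ∫ θ₁ in (0:ℝ)..(2 * π), ∫ θ₂ in (0:ℝ)..(2 * π), -Real.log ‖x θ₁ - y θ₂‖
      = -(1 / 2) * Real.log (1 - z₁ * z₂ + |z₁ - z₂|) := by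
  obtain ⟨hz₁, hz₁'⟩ := h₁
  obtain ⟨hz₂, hz₂'⟩ := h₂
  set r₁ := √(1 - z₁ ^ 2)
  set r₂ := √(1 - z₂ ^ 2)
  have hr₁ : r₁ ^ 2 = 1 - z₁ ^ 2 := sq_sqrt (by nlinarith)
  have hr₂ : r₂ ^ 2 = 1 - z₂ ^ 2 := sq_sqrt (by nlinarith)
  set A := 2 * (1 - z₁ * z₂)
  set B := 2 * (r₁ * r₂)
  have hdisc : A ^ 2 - B ^ 2 = (2 * (z₁ - z₂)) ^ 2 := by
    linear_combination (-4 * r₂ ^ 2) * hr₁ - 4 * (1 - z₁ ^ 2) * hr₂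
  have hBA : |B| ≤ A :=
    abs_le_of_sq_le_sq (by nlinarith) (by nlinarith)
  have hdist : ∀ θ₁ θ₂, ‖x θ₁ - y θ₂‖ ^ 2 = A - B * cos (θ₂ + -θ₁) := by
    intro θ₁ θ₂
    rw [norm_sub_sq_of_cylindrical (hx θ₁) (hy θ₂), ← sub_eq_add_neg]
    linear_combination hr₁ + hr₂
  have hinner : ∀ θ₁, ∫ θ₂ in (0:ℝ)..(2 * π), -log ‖x θ₁ - y θ₂‖
      = -π * log (1 - z₁ * z₂ + |z₁ - z₂|) := by
    intro θ₁
    have hlog : ∀ θ₂, -log ‖x θ₁ - y θ₂‖ = -(1 / 2) * log (A - B * cos (θ₂ + -θ₁)) := by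
      intro θ₂
      rw [← hdist, log_pow]
      push_cast
      ring
    simp only [hlog, intervalIntegral.integral_const_mul, integral_log_sub_mul_cos_add hBA, hdisc,
      sqrt_sq_eq_abs, abs_mul, abs_two]
    rw [show (A + 2 * |z₁ - z₂|) / 2 = 1 - z₁ * z₂ + |z₁ - z₂| by ring]
    ring
  simp only [hinner, intervalIntegral.integral_const, smul_eq_mul]
  field_simp
  ring

theorem stmt1 (z₁ z₂ : ℝ) (h₁ : z₁ ∈ Set.Ioo (-1:ℝ) 1) (h₂ : z₂ ∈ Set.Ioo (-1:ℝ) 1)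
    (hne : z₁ ≠ z₂)
    (x y : ℝ → EuclideanSpace ℝ (Fin 3))
    (hx : ∀ θ, x θ = ![Real.sqrt (1 - z₁ ^ 2) * Real.cos θ,
      Real.sqrt (1 - z₁ ^ 2) * Real.sin θ, z₁])
    (hy : ∀ θ, y θ = ![Real.sqrt (1 - z₂ ^ 2) * Real.cos θ,
      Real.sqrt (1 - z₂ ^ 2) * Real.sin θ, z₂]) :
    (1 / (4 * π ^ 2)) *
      ∫ θ₁ in (0:ℝ)..(2 * π), ∫ θ₂ in (0:ℝ)..(2 * π), -Real.log ‖x θ₁ - y θ₂‖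
      = -(1 / 2) * Real.log (1 - z₁ * z₂ + |z₁ - z₂|) :=
  stmt1_general z₁ z₂ h₁ h₂ x y hx hy
end

section
/- The logarithmic energy of the N-th roots of unity in the complex plane, defined as the sum over all ordered pairs of distinct roots of −log of their distance, equals −N log N. -/
/-!
With `ζ = exp (2πi/N)`, the roots `ζ ^ j` (`j < N`) are the nodes of the polynomial
`X ^ N - 1`, so for each fixed `i` the product `∏_{j ≠ i} (ζ ^ i - ζ ^ j)` is the derivative
`N X ^ (N - 1)` evaluated at `ζ ^ i`, whose absolute value is `N`. Hence every row of the
energy sum contributes `-log N`.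
-/

open Real Complex

open Finset Polynomial Lagrange

namespace IsPrimitiveRoot

section CommRing

variable {R : Type*} [CommRing R] [IsDomain R] {ζ : R} {N : ℕ}

theorem nodal_range_pow (hζ : IsPrimitiveRoot ζ N) (hN : 0 < N) :
    nodal (range N) (ζ ^ ·) = X ^ N - 1 := by
  simpa [nodal] using (X_pow_sub_C_eq_prod hζ hN (one_pow N)).symm

theorem prod_pow_sub_pow_erase (hζ : IsPrimitiveRoot ζ N) {i : ℕ} (hi : i ∈ range N) :
    ∏ j ∈ (range N).erase i, (ζ ^ i - ζ ^ j) = N * (ζ ^ i) ^ (N - 1) := by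
  rw [← eval_nodal (v := (ζ ^ ·)), ← eval_nodal_derivative_eval_node_eq hi,
    nodal_range_pow hζ (Nat.zero_lt_of_lt (mem_range.mp hi))]
  simp [derivative_X_pow]

end CommRing

section NormedField

variable {K : Type*} [NormedField K] {ζ : K} {N : ℕ}

theorem prod_norm_pow_sub_pow_erase (hζ : IsPrimitiveRoot ζ N) {i : ℕ} (hi : i ∈ range N) :
    ∏ j ∈ (range N).erase i, ‖ζ ^ i - ζ ^ j‖ = ‖(N : K)‖ := by
  have hN : N ≠ 0 := (Nat.zero_lt_of_lt (mem_range.mp hi)).ne'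
  have hnorm : ‖ζ‖ = 1 :=
    (pow_left_inj₀ (norm_nonneg ζ) zero_le_one hN).mp (by rw [← norm_pow, hζ.pow_eq_one]; simp)
  rw [← norm_prod, hζ.prod_pow_sub_pow_erase hi, norm_mul, norm_pow, norm_pow, hnorm]
  simp

theorem sum_log_inv_norm_pow_sub_pow (hζ : IsPrimitiveRoot ζ N) {i : ℕ} (hi : i ∈ range N) :
    ∑ j ∈ range N, (if i ≠ j then Real.log ‖ζ ^ i - ζ ^ j‖⁻¹ else 0) = -Real.log ‖(N : K)‖ := by
  have hne : ∀ j ∈ (range N).erase i, ‖ζ ^ i - ζ ^ j‖ ≠ 0 := by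
    intro j hj
    rw [norm_ne_zero_iff, sub_ne_zero]
    exact fun h => (mem_erase.mp hj).1
      (hζ.pow_inj (mem_range.mp (mem_of_mem_erase hj)) (mem_range.mp hi) h.symm)
  rw [← sum_filter, filter_ne, ← hζ.prod_norm_pow_sub_pow_erase hi, Real.log_prod hne,
    ← sum_neg_distrib]
  simp_rw [Real.log_inv]

end NormedField

end IsPrimitiveRoot

theorem stmt3 (N : ℕ) (hN : 1 ≤ N) :
    ∑ i ∈ Finset.range N, ∑ j ∈ Finset.range N,
      (if i ≠ j then
        Real.log (‖Complex.exp (2 * Real.pi * Complex.I * i / N) -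
          Complex.exp (2 * Real.pi * Complex.I * j / N)‖)⁻¹ else 0)
      = -(N : ℝ) * Real.log N := by
  have hζ := Complex.isPrimitiveRoot_exp N (by omega)
  have hexp (k : ℕ) : Complex.exp (2 * π * I * k / N) = Complex.exp (2 * π * I / N) ^ k := by
    rw [← Complex.exp_nat_mul]
    ring_nf
  simp only [hexp]
  rw [sum_congr rfl fun i hi => hζ.sum_log_inv_norm_pow_sub_pow hi, sum_const, card_range,
    Complex.norm_natCast, nsmul_eq_mul, mul_neg, neg_mul]
end

section
/- Fix positive integers r₁,…,r_p. The function F(z₁,…,z_p) = Σ_j (r_j/2) log(1−z_j²) + Σ_{j,k} r_j r_k (1/2) log(1 − z_j z_k + |z_j − z_k|), defined on tuples with 1 > z₁ > ⋯ > z_p > −1, has a critical point (vanishing gradient) exactly when z_l = (Σ_{j>l} r_j − Σ_{j<l} r_j)/(1 + Σ_j r_j) for all l. -/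
/-!
On the chamber `z₁ > ⋯ > z_p` one has
`1 - z_j z_k + |z_j - z_k| = (1 + z_{min j k}) (1 - z_{max j k})`, so there `F` is separable:
`F z = ∑ l, (A_l log (1 + z_l) + B_l log (1 - z_l))`, where counting the pairs `(j, k)` with
`min j k = l` (resp. `max j k = l`) gives `A_l = r_l (1 + r_l + 2 ∑_{k > l} r_k) / 2` and
`B_l = r_l (1 + r_l + 2 ∑_{k < l} r_k) / 2`. The gradient vanishes iff
`A_l / (1 + z_l) = B_l / (1 - z_l)` for every `l`, i.e. `z_l = (A_l - B_l) / (A_l + B_l)`.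
-/

open Real Finset Filter Topology

theorem one_sub_mul_add_abs_sub (x y : ℝ) :
    1 - x * y + |x - y| = (1 + max x y) * (1 - min x y) := by
  rcases le_total x y with h | h
  · rw [abs_of_nonpos (sub_nonpos.2 h), max_eq_right h, min_eq_left h]; ring
  · rw [abs_of_nonneg (sub_nonneg.2 h), max_eq_left h, min_eq_right h]; ring

theorem log_one_sub_sq {x : ℝ} (hx : x ∈ Set.Ioo (-1 : ℝ) 1) :
    log (1 - x ^ 2) = log (1 + x) + log (1 - x) := by
  rw [← log_mul (by linarith [hx.1]) (by linarith [hx.2])]; ring_nf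

theorem hasDerivAt_mul_log_one_add_add_mul_log_one_sub (A B : ℝ) {t : ℝ}
    (ht : t ∈ Set.Ioo (-1 : ℝ) 1) :
    HasDerivAt (fun s => A * log (1 + s) + B * log (1 - s)) (A / (1 + t) - B / (1 - t)) t := by
  have hpos := ((hasDerivAt_id t).const_add 1).log (by simp; linarith [ht.1])
  have hneg := ((hasDerivAt_id t).const_sub 1).log (by simp; linarith [ht.2])
  exact ((hpos.const_mul A).fun_add (hneg.const_mul B)).congr_deriv (by simp only [id]; ring)

theorem div_one_add_sub_div_one_sub_eq_zero_iff {A B t : ℝ} (hAB : A + B ≠ 0)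
    (ht : t ∈ Set.Ioo (-1 : ℝ) 1) :
    A / (1 + t) - B / (1 - t) = 0 ↔ t = (A - B) / (A + B) := by
  have hpos : 1 + t ≠ 0 := by linarith [ht.1]
  have hneg : 1 - t ≠ 0 := by linarith [ht.2]
  rw [sub_eq_zero, div_eq_div_iff hpos hneg, eq_div_iff hAB]
  constructor <;> intro h <;> linarith

section Separable

variable {ι : Type*} [Fintype ι]

theorem hasFDerivAt_sum_comp_apply {φ : ι → ℝ → ℝ} {φ' : ι → ℝ} {z : ι → ℝ}
    (h : ∀ i, HasDerivAt (φ i) (φ' i) (z i)) :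
    HasFDerivAt (fun w => ∑ i, φ i (w i))
      (∑ i, φ' i • ContinuousLinearMap.proj (R := ℝ) (φ := fun _ : ι => ℝ) i) z :=
  HasFDerivAt.fun_sum fun i _ => (h i).comp_hasFDerivAt z (hasFDerivAt_apply i z)

theorem sum_smul_proj_eq_zero_iff (c : ι → ℝ) :
    (∑ i, c i • ContinuousLinearMap.proj i : (ι → ℝ) →L[ℝ] ℝ) = 0 ↔ ∀ i, c i = 0 := by
  classical
  refine ⟨fun h i => ?_, fun h => by simp [h]⟩
  simpa [Pi.single_apply] using congrArg (fun L => L (Pi.single i 1)) h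

end Separable

section OrderedSums

variable {ι : Type*} [Fintype ι] [LinearOrder ι]

theorem sum_eq_sum_filter_lt_add_add_sum_filter_gt (f : ι → ℝ) (l : ι) :
    ∑ j, f j = ∑ j with j < l, f j + f l + ∑ j with l < j, f j := by
  rw [← sum_filter_add_sum_filter_not univ (· < l)]
  have : univ.filter (fun j => ¬ j < l) = insert l (univ.filter (l < ·)) := by
    ext j; simp [le_iff_eq_or_lt, eq_comm]
  rw [this, sum_insert (by simp), add_assoc]

theorem sum_sum_mul_mul_apply_min (r f : ι → ℝ) :
    ∑ j, ∑ k, r j * r k * f (min j k) = ∑ l, r l * (r l + 2 * ∑ k with l < k, r k) * f l := by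
  have split : ∀ j, ∑ k, r j * r k * f (min j k) =
      ∑ k with k < j, r j * r k * f k + r j * r j * f j + ∑ k with j < k, r j * r k * f j := by
    intro j
    rw [sum_eq_sum_filter_lt_add_add_sum_filter_gt (fun k => r j * r k * f (min j k)) j,
      min_self]
    congr 1; congr 1
    · exact sum_congr rfl fun k hk => by rw [min_eq_right (mem_filter.1 hk).2.le]
    · exact sum_congr rfl fun k hk => by rw [min_eq_left (mem_filter.1 hk).2.le]
  have swap : ∑ j, ∑ k with k < j, r j * r k * f k = ∑ j, ∑ k with j < k, r j * r k * f j := by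
    simp only [sum_filter]
    rw [sum_comm]
    exact sum_congr rfl fun j _ => sum_congr rfl fun k _ => by split_ifs <;> ring
  rw [sum_congr rfl fun j _ => split j, sum_add_distrib, sum_add_distrib, swap,
    ← sum_add_distrib, ← sum_add_distrib]
  refine sum_congr rfl fun l _ => ?_
  rw [← sum_mul, ← mul_sum]
  ring

theorem sum_sum_mul_mul_apply_max (r f : ι → ℝ) :
    ∑ j, ∑ k, r j * r k * f (max j k) = ∑ l, r l * (r l + 2 * ∑ k with k < l, r k) * f l :=
  sum_sum_mul_mul_apply_min (ι := ιᵒᵈ) r f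

noncomputable def logOneAddCoeff (r : ι → ℝ) (l : ι) : ℝ :=
  r l * (1 + r l + 2 * ∑ k with l < k, r k) / 2

noncomputable def logOneSubCoeff (r : ι → ℝ) (l : ι) : ℝ :=
  r l * (1 + r l + 2 * ∑ k with k < l, r k) / 2

theorem logOneAddCoeff_add_logOneSubCoeff (r : ι → ℝ) (l : ι) :
    logOneAddCoeff r l + logOneSubCoeff r l = r l * (1 + ∑ k, r k) := by
  rw [logOneAddCoeff, logOneSubCoeff, sum_eq_sum_filter_lt_add_add_sum_filter_gt r l]
  ring

theorem logOneAddCoeff_sub_logOneSubCoeff (r : ι → ℝ) (l : ι) :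
    logOneAddCoeff r l - logOneSubCoeff r l =
      r l * (∑ k with l < k, r k - ∑ k with k < l, r k) := by
  rw [logOneAddCoeff, logOneSubCoeff]
  ring

theorem sum_log_eq_sum_coeff_mul_log (r : ι → ℝ) {w : ι → ℝ}
    (hw : ∀ j, w j ∈ Set.Ioo (-1 : ℝ) 1) (hanti : Antitone w) :
    ∑ j, r j / 2 * log (1 - w j ^ 2) +
        ∑ j, ∑ k, r j * r k * (1 / 2 * log (1 - w j * w k + |w j - w k|)) =
      ∑ l, (logOneAddCoeff r l * log (1 + w l) + logOneSubCoeff r l * log (1 - w l)) := by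
  have pair : ∀ j k, log (1 - w j * w k + |w j - w k|) =
      log (1 + w (min j k)) + log (1 - w (max j k)) := by
    intro j k
    rw [one_sub_mul_add_abs_sub, ← hanti.map_min, ← hanti.map_max,
      log_mul (by linarith [(hw (min j k)).1]) (by linarith [(hw (max j k)).2])]
  have split : ∑ j, ∑ k, r j * r k * (1 / 2 * log (1 - w j * w k + |w j - w k|)) =
      1 / 2 * ∑ j, ∑ k, r j * r k * log (1 + w (min j k)) +
        1 / 2 * ∑ j, ∑ k, r j * r k * log (1 - w (max j k)) := by
    simp only [pair, mul_sum, ← sum_add_distrib]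
    exact sum_congr rfl fun j _ => sum_congr rfl fun k _ => by ring
  rw [split, sum_sum_mul_mul_apply_min r (fun l => log (1 + w l)),
    sum_sum_mul_mul_apply_max r (fun l => log (1 - w l))]
  simp only [log_one_sub_sq (hw _)]
  rw [mul_sum, mul_sum, ← sum_add_distrib, ← sum_add_distrib]
  refine sum_congr rfl fun l _ => ?_
  rw [logOneAddCoeff, logOneSubCoeff]
  ring

end OrderedSums

theorem stmt8_general (p : ℕ) (r : Fin p → ℕ) (hr : ∀ j, 0 < r j)
    (F : (Fin p → ℝ) → ℝ)
    (hF : ∀ z : Fin p → ℝ, F z =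
      ∑ j, ((r j : ℝ) / 2) * Real.log (1 - z j ^ 2) +
      ∑ j, ∑ k, (r j : ℝ) * (r k : ℝ) * ((1 / 2) *
        Real.log (1 - z j * z k + |z j - z k|)))
    (z : Fin p → ℝ) (hz : ∀ j, z j ∈ Set.Ioo (-1:ℝ) 1)
    (hmono : ∀ j k : Fin p, j < k → z k < z j) :
    fderiv ℝ F z = 0 ↔
      ∀ l : Fin p, z l =
        ((∑ j ∈ Finset.univ.filter (fun j => l < j), (r j : ℝ)) -
          ∑ j ∈ Finset.univ.filter (fun j => j < l), (r j : ℝ)) /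
        (1 + ∑ j, (r j : ℝ)) := by
  let ρ : Fin p → ℝ := fun j => r j
  have hcube : ∀ᶠ w in 𝓝 z, ∀ j, w j ∈ Set.Ioo (-1 : ℝ) 1 :=
    eventually_all.2 fun j => (continuous_apply j).continuousAt (isOpen_Ioo.mem_nhds (hz j))
  have hchamber : ∀ᶠ w in 𝓝 z, StrictAnti w :=
    eventually_all.2 fun j => eventually_all.2 fun k => eventually_imp_distrib_left.2 fun hjk =>
      (continuous_apply k).continuousAt.eventually_lt (continuous_apply j).continuousAt
        (hmono j k hjk)
  have hlocal : F =ᶠ[𝓝 z] fun w =>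
      ∑ l, (logOneAddCoeff ρ l * log (1 + w l) + logOneSubCoeff ρ l * log (1 - w l)) := by
    filter_upwards [hcube, hchamber] with w hw hw'
    rw [hF]
    exact sum_log_eq_sum_coeff_mul_log ρ hw hw'.antitone
  have hderiv := (hasFDerivAt_sum_comp_apply fun l =>
    hasDerivAt_mul_log_one_add_add_mul_log_one_sub _ _ (hz l)).congr_of_eventuallyEq hlocal
  rw [hderiv.fderiv, sum_smul_proj_eq_zero_iff]
  refine forall_congr' fun l => ?_
  have hρ : 0 < ρ l := Nat.cast_pos.2 (hr l)
  rw [div_one_add_sub_div_one_sub_eq_zero_iff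
      (by rw [logOneAddCoeff_add_logOneSubCoeff]; positivity) (hz l),
    logOneAddCoeff_add_logOneSubCoeff, logOneAddCoeff_sub_logOneSubCoeff,
    mul_div_mul_left _ _ hρ.ne']

theorem stmt8 (p : ℕ) (hp : 1 ≤ p) (r : Fin p → ℕ) (hr : ∀ j, 0 < r j)
    (F : (Fin p → ℝ) → ℝ)
    (hF : ∀ z : Fin p → ℝ, F z =
      ∑ j, ((r j : ℝ) / 2) * Real.log (1 - z j ^ 2) +
      ∑ j, ∑ k, (r j : ℝ) * (r k : ℝ) * ((1 / 2) *
        Real.log (1 - z j * z k + |z j - z k|)))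
    (z : Fin p → ℝ) (hz : ∀ j, z j ∈ Set.Ioo (-1:ℝ) 1)
    (hmono : ∀ j k : Fin p, j < k → z k < z j) :
    fderiv ℝ F z = 0 ↔
      ∀ l : Fin p, z l =
        ((∑ j ∈ Finset.univ.filter (fun j => l < j), (r j : ℝ)) -
          ∑ j ∈ Finset.univ.filter (fun j => j < l), (r j : ℝ)) /
        (1 + ∑ j, (r j : ℝ)) :=
  stmt8_general p r hr F hF z hz hmono
end

section
/- Under the hypotheses p = 2M−1, r_j = r_{p+1−j}, z_l = 1 − (1 + r_l + 2Σ_{j<l} r_j)/(N−1) where N = 2 + Σ_j r_j, the identity (1/2) Σ_{j=1}^p Σ_{k=1}^p r_j r_k log(1 − z_j z_k + |z_j − z_k|) = (N−1) Σ_{j=1}^p r_j (1−z_j) log(1−z_j) − Σ_{j=1}^p r_j log(1−z_j) holds. -/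
open Real

lemma sum_max_aux (p : ℕ) (c f : ℕ → ℝ) :
    ∑ j ∈ Finset.Icc 1 p, ∑ k ∈ Finset.Icc 1 p, c j * c k * f (max j k)
      = ∑ m ∈ Finset.Icc 1 p,
          (c m * c m + 2 * c m * ∑ j ∈ Finset.Icc 1 (m - 1), c j) * f m := by
  induction p with
  | zero => simp
  | succ p ih =>
    have hins : Finset.Icc 1 (p + 1) = insert (p + 1) (Finset.Icc 1 p) := by
      ext x; simp [Finset.mem_Icc, Finset.mem_insert]; omega
    have hnot : p + 1 ∉ Finset.Icc 1 p := by simp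
    rw [hins]
    simp only [Finset.sum_insert hnot]
    have h1 : ∀ k ∈ Finset.Icc 1 p, c (p+1) * c k * f (max (p+1) k)
        = c (p+1) * c k * f (p+1) := by
      intro k hk; simp at hk; rw [max_eq_left (by omega)]
    have h2 : ∀ j ∈ Finset.Icc 1 p,
        (c j * c (p+1) * f (max j (p+1)) + ∑ k ∈ Finset.Icc 1 p, c j * c k * f (max j k))
        = c j * c (p+1) * f (p+1) + ∑ k ∈ Finset.Icc 1 p, c j * c k * f (max j k) := by
      intro j hj; simp at hj; rw [max_eq_right (by omega)]
    rw [Finset.sum_congr rfl h1, Finset.sum_congr rfl h2, Finset.sum_add_distrib, ih]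
    simp only [Nat.add_sub_cancel, max_self]
    have e1 : ∑ x ∈ Finset.Icc 1 p, c (p+1) * c x * f (p+1)
        = c (p+1) * (∑ x ∈ Finset.Icc 1 p, c x) * f (p+1) := by
      rw [← Finset.sum_mul, ← Finset.mul_sum]
    have e2 : ∑ x ∈ Finset.Icc 1 p, c x * c (p+1) * f (p+1)
        = (∑ x ∈ Finset.Icc 1 p, c x) * c (p+1) * f (p+1) := by
      rw [← Finset.sum_mul, ← Finset.sum_mul]
    rw [e1, e2]
    ring

theorem stmt11 (M p : ℕ) (hM : 1 ≤ M) (hp : p = 2 * M - 1)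
    (r : ℕ → ℕ) (hr : ∀ j ∈ Finset.Icc 1 p, 0 < r j)
    (hsym : ∀ j ∈ Finset.Icc 1 p, r j = r (p + 1 - j))
    (N : ℕ) (hN : N = 2 + ∑ j ∈ Finset.Icc 1 p, r j)
    (z : ℕ → ℝ)
    (hz : ∀ j ∈ Finset.Icc 1 p, z j =
      1 - (1 + (r j : ℝ) + 2 * ∑ k ∈ Finset.Icc 1 (j - 1), (r k : ℝ)) / ((N : ℝ) - 1)) :
    (1 / 2) * ∑ j ∈ Finset.Icc 1 p, ∑ k ∈ Finset.Icc 1 p,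
        (r j : ℝ) * (r k : ℝ) * Real.log (1 - z j * z k + |z j - z k|)
      = ((N : ℝ) - 1) * ∑ j ∈ Finset.Icc 1 p, (r j : ℝ) * (1 - z j) * Real.log (1 - z j)
        - ∑ j ∈ Finset.Icc 1 p, (r j : ℝ) * Real.log (1 - z j) := by
  set D : ℝ := (N : ℝ) - 1 with hD
  have h2N : 2 ≤ N := hN ▸ Nat.le_add_right 2 _
  have hD0 : 0 < D := by
    have : (2:ℝ) ≤ (N:ℝ) := by exact_mod_cast h2N
    rw [hD]; linarith
  set a : ℕ → ℕ := fun j => 1 + r j + 2 * ∑ k ∈ Finset.Icc 1 (j - 1), r k with haa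
  have hadef : ∀ j, a j = 1 + r j + 2 * ∑ k ∈ Finset.Icc 1 (j - 1), r k := fun j => rfl
  have hzj : ∀ j ∈ Finset.Icc 1 p, 1 - z j = (a j : ℝ) / D := by
    intro j hj
    rw [hz j hj, hadef j]
    push_cast
    ring
  have hsplit : ∀ j : ℕ, 1 ≤ j →
      ∑ i ∈ Finset.Icc 1 j, r i = ∑ i ∈ Finset.Icc 1 (j-1), r i + r j := by
    intro j h1
    have h := Finset.sum_Icc_succ_top (a := 1) (b := j - 1) (by omega) r
    rwa [show j - 1 + 1 = j by omega] at h
  have hmono : ∀ j k : ℕ, 1 ≤ j → j ≤ k → a j ≤ a k := by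
    intro j k h1 hjk
    rcases eq_or_lt_of_le hjk with h | h
    · rw [h]
    · have h2 := hsplit j h1
      have h3 : ∑ i ∈ Finset.Icc 1 j, r i ≤ ∑ i ∈ Finset.Icc 1 (k-1), r i := by
        apply Finset.sum_le_sum_of_subset
        apply Finset.Icc_subset_Icc_right
        omega
      rw [hadef j, hadef k]
      omega
  have h1p : ∀ m : ℕ, Finset.Icc 1 m = Finset.Ioc 0 m := by
    intro m; ext x; simp [Finset.mem_Icc, Finset.mem_Ioc]; omega
  have hflipsum : ∀ j, j ≤ p →
      ∑ i ∈ Finset.Ioc (p - j) p, r i = ∑ i ∈ Finset.Icc 1 j, r i := by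
    intro j hj
    apply Finset.sum_nbij' (i := fun i => p + 1 - i) (j := fun i => p + 1 - i)
    · intro x hx; simp [Finset.mem_Ioc] at hx; simp [Finset.mem_Icc]; omega
    · intro x hx; simp [Finset.mem_Icc] at hx; simp [Finset.mem_Ioc]; omega
    · intro x hx; simp [Finset.mem_Ioc] at hx; omega
    · intro x hx; simp [Finset.mem_Icc] at hx; omega
    · intro x hx; simp [Finset.mem_Ioc] at hx
      exact hsym x (by simp [Finset.mem_Icc]; omega)
  have hsum_split : ∀ j, 1 ≤ j → j ≤ p →
      ∑ i ∈ Finset.Icc 1 p, r i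
        = ∑ i ∈ Finset.Icc 1 (p - j), r i + ∑ i ∈ Finset.Icc 1 j, r i := by
    intro j h1 hj
    rw [← hflipsum j hj, h1p p, h1p (p - j)]
    exact (Finset.sum_Ioc_consecutive r (by omega) (by omega)).symm
  have hsymra : ∀ j ∈ Finset.Icc 1 p, a j + a (p + 1 - j) = 2 * (N - 1) := by
    intro j hj
    simp only [Finset.mem_Icc] at hj
    have h1 := hsum_split j hj.1 hj.2
    have h2 := hsplit j hj.1
    have h3 : r (p + 1 - j) = r j := (hsym j (by simp [Finset.mem_Icc]; exact hj)).symm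
    rw [hadef, hadef, show p + 1 - j - 1 = p - j by omega, h3]
    omega
  have hapos : ∀ j, 1 ≤ a j := fun j => by rw [hadef]; omega
  have haD : ∀ j ∈ Finset.Icc 1 p, (0:ℝ) < 1 - z j := by
    intro j hj
    rw [hzj j hj]
    apply div_pos _ hD0
    exact_mod_cast hapos j
  have hmem : ∀ j ∈ Finset.Icc 1 p, p + 1 - j ∈ Finset.Icc 1 p := by
    intro j hj; simp [Finset.mem_Icc] at *; omega
  have hone : ∀ j ∈ Finset.Icc 1 p, 1 + z j = 1 - z (p + 1 - j) := by
    intro j hj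
    have e1 := hzj j hj
    have e2 := hzj _ (hmem j hj)
    have e3 : (a (p+1-j) : ℝ) = 2 * D - a j := by
      have h := congrArg (Nat.cast : ℕ → ℝ) (hsymra j hj)
      push_cast [Nat.cast_sub (by omega : 1 ≤ N)] at h
      rw [hD]; linarith
    have hzv : z j = 1 - (a j:ℝ)/D := by linarith
    rw [e2, e3, hzv]
    field_simp
    ring
  have main : ∀ j ∈ Finset.Icc 1 p, ∀ k ∈ Finset.Icc 1 p, j ≤ k →
      Real.log (1 - z j * z k + |z j - z k|)
        = Real.log (1 - z (p + 1 - j)) + Real.log (1 - z k) := by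
    intro j hj k hk hjk
    have hj1 : 1 ≤ j := by simp [Finset.mem_Icc] at hj; omega
    have hle : ((a j : ℝ)) ≤ ((a k : ℝ)) := by exact_mod_cast hmono j k hj1 hjk
    have e1 := hzj j hj
    have e2 := hzj k hk
    have hdiv : (a j:ℝ)/D ≤ (a k:ℝ)/D := by gcongr
    have hjk' : z k ≤ z j := by linarith
    have habs : |z j - z k| = z j - z k := abs_of_nonneg (by linarith)
    have hprod : 1 - z j * z k + |z j - z k| = (1 - z (p+1-j)) * (1 - z k) := by
      rw [habs, ← hone j hj]; ring
    rw [hprod, Real.log_mul (ne_of_gt (haD _ (hmem j hj))) (ne_of_gt (haD k hk))]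
  have key : ∀ j ∈ Finset.Icc 1 p, ∀ k ∈ Finset.Icc 1 p,
      Real.log (1 - z j * z k + |z j - z k|)
        = Real.log (1 - z (p + 1 - min j k)) + Real.log (1 - z (max j k)) := by
    intro j hj k hk
    rcases le_total j k with h | h
    · rw [min_eq_left h, max_eq_right h]; exact main j hj k hk h
    · rw [min_eq_right h, max_eq_left h,
        show (1 - z j * z k + |z j - z k|) = (1 - z k * z j + |z k - z j|) by
          rw [abs_sub_comm]; ring]
      exact main k hk j hj h
  have step1 : ∑ j ∈ Finset.Icc 1 p, ∑ k ∈ Finset.Icc 1 p,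
        (r j:ℝ)*(r k:ℝ)*Real.log (1 - z j * z k + |z j - z k|)
      = ∑ j ∈ Finset.Icc 1 p, ∑ k ∈ Finset.Icc 1 p,
          ((r j:ℝ)*(r k:ℝ)*Real.log (1 - z (p+1 - min j k))
            + (r j:ℝ)*(r k:ℝ)*Real.log (1 - z (max j k))) := by
    refine Finset.sum_congr rfl fun j hj => Finset.sum_congr rfl fun k hk => ?_
    rw [key j hj k hk]; ring
  have flip : ∑ j ∈ Finset.Icc 1 p, ∑ k ∈ Finset.Icc 1 p,
        (r j:ℝ)*(r k:ℝ)*Real.log (1 - z (p+1 - min j k))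
      = ∑ j ∈ Finset.Icc 1 p, ∑ k ∈ Finset.Icc 1 p,
          (r j:ℝ)*(r k:ℝ)*Real.log (1 - z (max j k)) := by
    rw [← Finset.sum_product' (Finset.Icc 1 p) (Finset.Icc 1 p)
          (fun j k => (r j:ℝ)*(r k:ℝ)*Real.log (1 - z (p+1 - min j k))),
        ← Finset.sum_product' (Finset.Icc 1 p) (Finset.Icc 1 p)
          (fun j k => (r j:ℝ)*(r k:ℝ)*Real.log (1 - z (max j k)))]
    apply Finset.sum_nbij' (i := fun q => (p+1-q.1, p+1-q.2)) (j := fun q => (p+1-q.1, p+1-q.2))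
    · intro x hx; simp [Finset.mem_product, Finset.mem_Icc] at *; omega
    · intro x hx; simp [Finset.mem_product, Finset.mem_Icc] at *; omega
    · intro x hx; simp [Finset.mem_product, Finset.mem_Icc] at hx
      obtain ⟨⟨h1,h2⟩,h3,h4⟩ := hx
      rw [show p+1-(p+1-x.1) = x.1 by omega, show p+1-(p+1-x.2) = x.2 by omega]
    · intro x hx; simp [Finset.mem_product, Finset.mem_Icc] at hx
      obtain ⟨⟨h1,h2⟩,h3,h4⟩ := hx
      rw [show p+1-(p+1-x.1) = x.1 by omega, show p+1-(p+1-x.2) = x.2 by omega]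
    · intro x hx
      simp only [Finset.mem_product, Finset.mem_Icc] at hx
      obtain ⟨⟨ha1, ha2⟩, hb1, hb2⟩ := hx
      have e1 : r (p+1-x.1) = r x.1 := (hsym x.1 (by simp [Finset.mem_Icc]; omega)).symm
      have e2 : r (p+1-x.2) = r x.2 := (hsym x.2 (by simp [Finset.mem_Icc]; omega)).symm
      have e3 : max (p+1-x.1) (p+1-x.2) = p + 1 - min x.1 x.2 := by omega
      simp only [e1, e2, e3]
  have rhs : D * (∑ j ∈ Finset.Icc 1 p, (r j:ℝ)*(1 - z j)*Real.log (1-z j))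
        - ∑ j ∈ Finset.Icc 1 p, (r j:ℝ)*Real.log (1-z j)
      = ∑ m ∈ Finset.Icc 1 p,
          ((r m:ℝ)*(r m:ℝ) + 2*(r m:ℝ)*∑ j ∈ Finset.Icc 1 (m-1), (r j:ℝ))
            * Real.log (1 - z m) := by
    rw [Finset.mul_sum, ← Finset.sum_sub_distrib]
    refine Finset.sum_congr rfl fun m hm => ?_
    have e1 := hzj m hm
    have e2 : D * (1 - z m) = (a m:ℝ) := by rw [e1]; field_simp
    have e3 : (a m : ℝ) = 1 + (r m:ℝ) + 2 * ∑ j ∈ Finset.Icc 1 (m-1), (r j:ℝ) := by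
      rw [hadef]; push_cast; ring
    have e4 : D * ((r m:ℝ) * (1-z m) * Real.log (1-z m))
        = (r m:ℝ) * (a m:ℝ) * Real.log (1-z m) := by rw [← e2]; ring
    rw [e4, e3]; ring
  rw [step1]
  simp only [Finset.sum_add_distrib]
  rw [flip, rhs, sum_max_aux p (fun m => (r m:ℝ)) (fun m => Real.log (1 - z m))]
  ring
end

section
/- Let a < b be integers and f : [a,b] → ℝ be C³ on the open interval with |f‴| ≤ C. Define the composite trapezoidal rule T(f) = (f(a)+f(b))/2 + Σ_{j=a+1}^{b−1} f(j). Then |T(f) − ∫_a^b f(x) dx − (f′(b) − f′(a))/12| ≤ C(b−a)/(24π). -/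
/-!
On a unit interval `[c, c + 1]`, three integrations by parts against `Bₖ(x - c) / k!`, where
`B₁, B₂, B₃` are the Bernoulli polynomials, turn the trapezoid error corrected by
`(f'(c + 1) - f'(c)) / 12` into `∫ B₃(x - c) / 6 · f'''(x) dx`. As `|B₃ / 6| ≤ 1/96` on `[0, 1]`,
each unit error is at most `C / 96 ≤ C / (24π)`. Summing over the `b - a` unit intervals, the
boundary terms telescope to the composite rule.
-/

open Real MeasureTheory Set Filter Topology

theorem Finset.sum_Ico_int_add_one_sub {M : Type*} [AddCommGroup M] (F : ℤ → M) {a b : ℤ}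
    (hab : a ≤ b) :
    ∑ c ∈ Finset.Ico a b, (F (c + 1) - F c) = F b - F a := by
  induction b, hab using Int.leInduction with
  | base => simp
  | succ n hn ih =>
    rw [Finset.Ico_add_one_right_eq_Icc, ← Finset.Ico_insert_right hn, Finset.sum_insert (by simp),
      ih]
    abel

theorem iteratedDerivWithin_eq_iteratedDeriv_of_mem_nhds {f : ℝ → ℝ} {s : Set ℝ} {x : ℝ}
    (hs : s ∈ 𝓝 x) (n : ℕ) : iteratedDerivWithin n f s x = iteratedDeriv n f x := by
  simp only [iteratedDerivWithin, iteratedDeriv,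
    iteratedFDerivWithin_congr_set (eventuallyEq_univ.2 hs), iteratedFDerivWithin_univ]

theorem hasDerivAt_iteratedDerivWithin {f : ℝ → ℝ} {s t u : Set ℝ} {x : ℝ} {n : WithTop ℕ∞}
    {k : ℕ} (hf : ContDiffOn ℝ n f u) (hu : IsOpen u) (hk : k < n) (hx : x ∈ u)
    (hs : s ∈ 𝓝 x) (ht : t ∈ 𝓝 x) :
    HasDerivAt (iteratedDerivWithin k f s) (iteratedDerivWithin (k + 1) f t x) x := by
  have hd := ((hf.differentiableOn_iteratedDerivWithin hk hu.uniqueDiffOn) x hx).hasDerivWithinAt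
    |>.hasDerivAt (hu.mem_nhds hx)
  rw [← iteratedDerivWithin_succ, iteratedDerivWithin_eq_iteratedDeriv_of_mem_nhds
    (hu.mem_nhds hx)] at hd
  rw [iteratedDerivWithin_eq_iteratedDeriv_of_mem_nhds ht]
  refine hd.congr_of_eventuallyEq ?_
  filter_upwards [eventually_mem_nhds_iff.2 hs, hu.mem_nhds hx] with y hys hyu
  rw [iteratedDerivWithin_eq_iteratedDeriv_of_mem_nhds hys,
    iteratedDerivWithin_eq_iteratedDeriv_of_mem_nhds (hu.mem_nhds hyu)]

theorem intervalIntegrable_of_continuousOn_Ioo_of_abs_le {g : ℝ → ℝ} {a b C : ℝ} (hab : a ≤ b)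
    (hg : ContinuousOn g (Ioo a b)) (hC : ∀ x ∈ Ioo a b, |g x| ≤ C) :
    IntervalIntegrable g volume a b := by
  rw [intervalIntegrable_iff_integrableOn_Ioo_of_le hab]
  exact IntegrableOn.of_bound measure_Ioo_lt_top (hg.aestronglyMeasurable measurableSet_Ioo) C
    (ae_restrict_of_forall_mem measurableSet_Ioo hC)

theorem integral_mul_deriv_eq_deriv_mul_of_hasDerivAt_of_le {u u' v v' : ℝ → ℝ} {a b : ℝ}
    (hab : a ≤ b) (hu : ∀ x, HasDerivAt u (u' x) x) (hu' : Continuous u')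
    (hv : ContinuousOn v (Icc a b)) (hvv' : ∀ x ∈ Ioo a b, HasDerivAt v (v' x) x)
    (hv' : IntervalIntegrable v' volume a b) :
    ∫ x in a..b, u x * v' x = u b * v b - u a * v a - ∫ x in a..b, u' x * v x := by
  refine intervalIntegral.integral_mul_deriv_eq_deriv_mul_of_hasDerivAt
    (fun x _ ↦ (hu x).continuousAt.continuousWithinAt) (by rwa [uIcc_of_le hab]) (fun x _ ↦ hu x)
    (by rwa [min_eq_left hab, max_eq_right hab]) (hu'.intervalIntegrable a b) hv'

/-- `B₃(u) / 3!`. -/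
noncomputable def trapezoidKernel (u : ℝ) : ℝ := u ^ 3 / 6 - u ^ 2 / 4 + u / 12

theorem abs_trapezoidKernel_le {u : ℝ} (h0 : 0 ≤ u) (h1 : u ≤ 1) :
    |trapezoidKernel u| ≤ 1 / 96 := by
  rw [trapezoidKernel, abs_le]
  constructor <;> nlinarith [sq_nonneg (u - 1/2), sq_nonneg (u - 1/4), sq_nonneg (u - 3/4),
    mul_nonneg h0 (sub_nonneg.2 h1), mul_nonneg (mul_nonneg h0 h0) h0]

theorem hasDerivAt_trapezoidKernel (u : ℝ) :
    HasDerivAt trapezoidKernel (u ^ 2 / 2 - u / 2 + 1 / 12) u :=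
  (((hasDerivAt_pow 3 u).div_const 6).sub ((hasDerivAt_pow 2 u).div_const 4)).add
    ((hasDerivAt_id' u).div_const 12) |>.congr_deriv (by norm_num; ring)

noncomputable def correctedTrapezoidError (f f' : ℝ → ℝ) (c : ℝ) : ℝ :=
  (f c + f (c + 1)) / 2 - (∫ x in c..c + 1, f x) - (f' (c + 1) - f' c) / 12

theorem correctedTrapezoidError_eq_integral_kernel {f f₁ f₂ f₃ : ℝ → ℝ} {c : ℝ}
    (hf : ContinuousOn f (Icc c (c + 1))) (hf₁ : ContinuousOn f₁ (Icc c (c + 1)))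
    (hf₂ : ContinuousOn f₂ (Icc c (c + 1))) (hf₃ : IntervalIntegrable f₃ volume c (c + 1))
    (hd₀ : ∀ x ∈ Ioo c (c + 1), HasDerivAt f (f₁ x) x)
    (hd₁ : ∀ x ∈ Ioo c (c + 1), HasDerivAt f₁ (f₂ x) x)
    (hd₂ : ∀ x ∈ Ioo c (c + 1), HasDerivAt f₂ (f₃ x) x) :
    correctedTrapezoidError f f₁ c = ∫ x in c..c + 1, trapezoidKernel (x - c) * f₃ x := by
  have hc : c ≤ c + 1 := by linarith
  have hK₁ (u : ℝ) : HasDerivAt (fun u ↦ u - 1 / 2) 1 u := (hasDerivAt_id' u).sub_const _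
  have hK₂ (u : ℝ) : HasDerivAt (fun u ↦ u ^ 2 / 2 - u / 2 + 1 / 12) (u - 1 / 2) u :=
    (((hasDerivAt_pow 2 u).div_const 2).sub ((hasDerivAt_id' u).div_const 2)).add_const _
      |>.congr_deriv (by norm_num)
  have step₁ := integral_mul_deriv_eq_deriv_mul_of_hasDerivAt_of_le hc
    (fun x ↦ (hK₁ (x - c)).comp_sub_const x c) continuous_const hf hd₀
    (hf₁.intervalIntegrable_of_Icc hc)
  have step₂ := integral_mul_deriv_eq_deriv_mul_of_hasDerivAt_of_le hc
    (fun x ↦ (hK₂ (x - c)).comp_sub_const x c) (by fun_prop) hf₁ hd₁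
    (hf₂.intervalIntegrable_of_Icc hc)
  have step₃ := integral_mul_deriv_eq_deriv_mul_of_hasDerivAt_of_le hc
    (fun x ↦ (hasDerivAt_trapezoidKernel (x - c)).comp_sub_const x c) (by fun_prop) hf₂ hd₂ hf₃
  beta_reduce at step₁ step₂ step₃
  rw [step₃, step₂, step₁, correctedTrapezoidError]
  simp only [add_sub_cancel_left, sub_self, one_mul, trapezoidKernel]
  ring

theorem abs_correctedTrapezoidError_le {f f₁ f₂ f₃ : ℝ → ℝ} {c C : ℝ}
    (hf : ContinuousOn f (Icc c (c + 1))) (hf₁ : ContinuousOn f₁ (Icc c (c + 1)))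
    (hf₂ : ContinuousOn f₂ (Icc c (c + 1))) (hf₃ : IntervalIntegrable f₃ volume c (c + 1))
    (hd₀ : ∀ x ∈ Ioo c (c + 1), HasDerivAt f (f₁ x) x)
    (hd₁ : ∀ x ∈ Ioo c (c + 1), HasDerivAt f₁ (f₂ x) x)
    (hd₂ : ∀ x ∈ Ioo c (c + 1), HasDerivAt f₂ (f₃ x) x)
    (hbound : ∀ x ∈ Ioo c (c + 1), |f₃ x| ≤ C) :
    |correctedTrapezoidError f f₁ c| ≤ C / 96 := by
  rw [correctedTrapezoidError_eq_integral_kernel hf hf₁ hf₂ hf₃ hd₀ hd₁ hd₂,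
    intervalIntegral.integral_of_le (by linarith), integral_Ioc_eq_integral_Ioo]
  have hpointwise : ∀ x ∈ Ioo c (c + 1), ‖trapezoidKernel (x - c) * f₃ x‖ ≤ 1 / 96 * C :=
    fun x hx ↦ by
      rw [norm_mul]
      exact mul_le_mul (abs_trapezoidKernel_le (by linarith [hx.1]) (by linarith [hx.2]))
        (hbound x hx) (abs_nonneg _) (by norm_num)
  have h := norm_setIntegral_le_of_norm_le_const (μ := volume) measure_Ioo_lt_top hpointwise
  rw [Real.volume_real_Ioo, add_sub_cancel_left, max_eq_left zero_le_one, mul_one,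
    Real.norm_eq_abs] at h
  linarith

theorem sum_correctedTrapezoidError {f f₁ : ℝ → ℝ} {a b : ℤ} (hab : a < b)
    (hf : IntervalIntegrable f volume a b) :
    ∑ c ∈ Finset.Ico a b, correctedTrapezoidError f f₁ c =
      ((f a + f b) / 2 + ∑ j ∈ Finset.Ioo a b, f j) - (∫ x in (a : ℝ)..b, f x)
        - (f₁ b - f₁ a) / 12 := by
  set H : ℤ → ℝ := fun k ↦ f k / 2 - (∫ x in (a : ℝ)..k, f x) - f₁ k / 12
  have hint : ∀ k ∈ Finset.Icc a b, IntervalIntegrable f volume a k := fun k hk ↦ by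
    rw [Finset.mem_Icc] at hk
    refine hf.mono_set (uIcc_subset_uIcc left_mem_uIcc ?_)
    rw [uIcc_of_le (by exact_mod_cast hab.le)]
    exact ⟨by exact_mod_cast hk.1, by exact_mod_cast hk.2⟩
  have hsplit : ∀ c ∈ Finset.Ico a b,
      correctedTrapezoidError f f₁ c = f c + (H (c + 1) - H c) := fun c hc ↦ by
    rw [Finset.mem_Ico] at hc
    have h := intervalIntegral.integral_interval_sub_left
      (hint (c + 1) (Finset.mem_Icc.2 ⟨by omega, by omega⟩))
      (hint c (Finset.mem_Icc.2 ⟨hc.1, hc.2.le⟩))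
    push_cast at h
    simp only [correctedTrapezoidError, H, ← h]
    push_cast
    ring
  rw [Finset.sum_congr rfl hsplit, Finset.sum_add_distrib, Finset.sum_Ico_int_add_one_sub H hab.le,
    ← Finset.Ioo_insert_left hab, Finset.sum_insert (by simp)]
  simp only [H, intervalIntegral.integral_same]
  ring

theorem abs_correctedTrapezoidError_le_of_contDiffOn {f : ℝ → ℝ} {a b c C : ℝ} (hab : a < b)
    (hac : a ≤ c) (hcb : c + 1 ≤ b) (hf2 : ContDiffOn ℝ 2 f (Icc a b))
    (hf3 : ContDiffOn ℝ 3 f (Ioo a b))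
    (hbound : ∀ x ∈ Ioo a b, |iteratedDerivWithin 3 f (Ioo a b) x| ≤ C) :
    |correctedTrapezoidError f (derivWithin f (Icc a b)) c| ≤ C / 96 := by
  set s := Icc a b
  set u := Ioo a b
  have hsub : Icc c (c + 1) ⊆ s := Icc_subset_Icc hac hcb
  have hsub' : Ioo c (c + 1) ⊆ u := Ioo_subset_Ioo hac hcb
  have hcont (k : ℕ) (hk : k ≤ 2) : ContinuousOn (iteratedDerivWithin k f s) (Icc c (c + 1)) :=
    (hf2.continuousOn_iteratedDerivWithin (by exact_mod_cast hk) (uniqueDiffOn_Icc hab)).mono hsub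
  have hderiv (k : ℕ) (hk : k < 3) {t : Set ℝ} (ht : ∀ x ∈ u, t ∈ 𝓝 x) (x : ℝ)
      (hx : x ∈ Ioo c (c + 1)) :
      HasDerivAt (iteratedDerivWithin k f s) (iteratedDerivWithin (k + 1) f t x) x :=
    hasDerivAt_iteratedDerivWithin hf3 isOpen_Ioo (by exact_mod_cast hk) (hsub' hx)
      (Icc_mem_nhds (hsub' hx).1 (hsub' hx).2) (ht x (hsub' hx))
  have hs : ∀ x ∈ u, s ∈ 𝓝 x := fun x hx ↦ Icc_mem_nhds hx.1 hx.2
  have hu : ∀ x ∈ u, u ∈ 𝓝 x := fun x hx ↦ isOpen_Ioo.mem_nhds hx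
  have hf₃ : IntervalIntegrable (iteratedDerivWithin 3 f u) volume c (c + 1) :=
    intervalIntegrable_of_continuousOn_Ioo_of_abs_le (by linarith)
      ((hf3.continuousOn_iteratedDerivWithin le_rfl isOpen_Ioo.uniqueDiffOn).mono hsub')
      fun x hx ↦ hbound x (hsub' hx)
  rw [← iteratedDerivWithin_one]
  exact abs_correctedTrapezoidError_le (by simpa using hcont 0 (by norm_num))
    (hcont 1 (by norm_num)) (hcont 2 (by norm_num)) hf₃
    (fun x hx ↦ by simpa using hderiv 0 (by norm_num) hs x hx) (hderiv 1 (by norm_num) hs)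
    (hderiv 2 (by norm_num) hu) fun x hx ↦ hbound x (hsub' hx)

theorem stmt14_general (a b : ℤ) (hab : a < b) (C : ℝ) (f : ℝ → ℝ)
    (hf2 : ContDiffOn ℝ 2 f (Set.Icc (a : ℝ) b))
    (hf3 : ContDiffOn ℝ 3 f (Set.Ioo (a : ℝ) b))
    (hbound : ∀ x ∈ Set.Ioo (a : ℝ) b,
      |iteratedDerivWithin 3 f (Set.Ioo (a : ℝ) b) x| ≤ C) :
    |((f a + f b) / 2 + ∑ j ∈ Finset.Ioo a b, f j)
        - (∫ x in (a : ℝ)..b, f x)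
        - (derivWithin f (Set.Icc (a : ℝ) b) b - derivWithin f (Set.Icc (a : ℝ) b) a) / 12|
      ≤ C * ((b : ℝ) - a) / (24 * π) := by
  have hab' : (a : ℝ) < b := by exact_mod_cast hab
  have hC : 0 ≤ C := (abs_nonneg _).trans (hbound ((a + b) / 2) ⟨by linarith, by linarith⟩)
  have hunit (c : ℤ) (hc : c ∈ Finset.Ico a b) :
      |correctedTrapezoidError f (derivWithin f (Icc a b)) c| ≤ C / 96 := by
    rw [Finset.mem_Ico] at hc
    exact abs_correctedTrapezoidError_le_of_contDiffOn hab' (by exact_mod_cast hc.1)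
      (by exact_mod_cast hc.2) hf2 hf3 hbound
  rw [← sum_correctedTrapezoidError hab (hf2.continuousOn.intervalIntegrable_of_Icc hab'.le)]
  calc _ ≤ ∑ c ∈ Finset.Ico a b, |correctedTrapezoidError f (derivWithin f (Icc a b)) c| :=
        Finset.abs_sum_le_sum_abs _ _
    _ ≤ (Finset.Ico a b).card • (C / 96) := Finset.sum_le_card_nsmul _ _ _ hunit
    _ = C * ((b : ℝ) - a) / 96 := by
        rw [Int.card_Ico, nsmul_eq_mul, ← Int.cast_natCast, Int.toNat_of_nonneg (by omega),
          Int.cast_sub]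
        ring
    _ ≤ C * ((b : ℝ) - a) / (24 * π) :=
        div_le_div_of_nonneg_left (mul_nonneg hC (by linarith)) (by positivity)
          (by linarith [pi_le_four])

theorem stmt14 (a b : ℤ) (hab : a < b) (C : ℝ) (hC : 0 < C) (f : ℝ → ℝ)
    (hf2 : ContDiffOn ℝ 2 f (Set.Icc (a : ℝ) b))
    (hf3 : ContDiffOn ℝ 3 f (Set.Ioo (a : ℝ) b))
    (hbound : ∀ x ∈ Set.Ioo (a : ℝ) b,
      |iteratedDerivWithin 3 f (Set.Ioo (a : ℝ) b) x| ≤ C) :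
    |((f a + f b) / 2 + ∑ j ∈ Finset.Ioo a b, f j)
        - (∫ x in (a : ℝ)..b, f x)
        - (derivWithin f (Set.Icc (a : ℝ) b) b - derivWithin f (Set.Icc (a : ℝ) b) a) / 12|
      ≤ C * ((b : ℝ) - a) / (24 * π) :=
  stmt14_general a b hab C f hf2 hf3 hbound
end

section
/- Let p = 2M−1, r_j = r_{p+1−j} positive integers, z_j = 1 − (1 + r_j + 2Σ_{k<j} r_k)/(N−1), N = 2 + Σ_j r_j. Then the expected logarithmic energy E = −2 log 2 − Σ_j r_j(log 4 + (1/2) log(1−z_j²) + log r_j) − Σ_{j,k} r_j r_k (1/2) log(1 − z_j z_k + |z_j − z_k|) equals −(N−1) log 4 − Σ_j r_j log r_j − (N−1) Σ_j r_j (1−z_j) log(1−z_j). -/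
open Real

namespace Stmt19Aux

lemma tri_swap (p : ℕ) (f : ℕ → ℕ → ℝ) :
    ∑ j ∈ Finset.Icc 1 p, ∑ k ∈ Finset.Icc (j+1) p, f j k
      = ∑ k ∈ Finset.Icc 1 p, ∑ j ∈ Finset.Icc 1 (k-1), f j k := by
  apply Finset.sum_comm'
  intro j k
  simp only [Finset.mem_Icc]
  omega

lemma split_sum (p j : ℕ) (hj : j ≤ p) (f : ℕ → ℝ) :
    ∑ k ∈ Finset.Icc 1 p, f k
      = (∑ k ∈ Finset.Icc 1 j, f k) + ∑ k ∈ Finset.Icc (j+1) p, f k := by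
  rw [← Finset.sum_union (by
    rw [Finset.disjoint_left]; intro a ha hb
    simp only [Finset.mem_Icc] at ha hb; omega)]
  congr 1
  ext x
  simp only [Finset.mem_union, Finset.mem_Icc]
  omega

lemma sum_Icc_split_top (j : ℕ) (hj : 1 ≤ j) (f : ℕ → ℝ) :
    ∑ k ∈ Finset.Icc 1 j, f k = (∑ k ∈ Finset.Icc 1 (j-1), f k) + f j := by
  have h := Finset.sum_Icc_succ_top (a := 1) (b := j - 1) (show 1 ≤ j - 1 + 1 by omega) f
  rw [show j - 1 + 1 = j by omega] at h
  exact h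

lemma reflect_gen (p a b : ℕ) (ha : 1 ≤ a) (hb : b ≤ p) (f : ℕ → ℝ) :
    ∑ k ∈ Finset.Icc a b, f k
      = ∑ k ∈ Finset.Icc (p+1-b) (p+1-a), f (p+1-k) := by
  apply Finset.sum_nbij' (i := fun k => p+1-k) (j := fun k => p+1-k)
  · intro x hx; simp only [Finset.mem_Icc] at hx ⊢; omega
  · intro x hx; simp only [Finset.mem_Icc] at hx ⊢; omega
  · intro x hx; simp only [Finset.mem_Icc] at hx; omega
  · intro x hx; simp only [Finset.mem_Icc] at hx; omega
  · intro x hx; simp only [Finset.mem_Icc] at hx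
    congr 1; omega

lemma reflect_full (p : ℕ) (f : ℕ → ℝ) :
    ∑ k ∈ Finset.Icc 1 p, f k = ∑ k ∈ Finset.Icc 1 p, f (p+1-k) := by
  have h := reflect_gen p 1 p le_rfl le_rfl f
  rw [show p+1-p = 1 by omega, show p+1-1 = p by omega] at h
  exact h

lemma reflect_full2 (p : ℕ) (f : ℕ → ℕ → ℝ) :
    ∑ j ∈ Finset.Icc 1 p, ∑ k ∈ Finset.Icc 1 p, f j k
      = ∑ j ∈ Finset.Icc 1 p, ∑ k ∈ Finset.Icc 1 p, f (p+1-j) (p+1-k) := by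
  rw [reflect_full p (fun j => ∑ k ∈ Finset.Icc 1 p, f j k)]
  exact Finset.sum_congr rfl fun j _ => reflect_full p (fun k => f (p+1-j) k)

end Stmt19Aux

open Stmt19Aux

theorem stmt19 (M p : ℕ) (hM : 1 ≤ M) (hp : p = 2 * M - 1)
    (r : ℕ → ℕ) (hr : ∀ j ∈ Finset.Icc 1 p, 0 < r j)
    (hsym : ∀ j ∈ Finset.Icc 1 p, r j = r (p + 1 - j))
    (N : ℕ) (hN : N = 2 + ∑ j ∈ Finset.Icc 1 p, r j)
    (z : ℕ → ℝ)
    (hz : ∀ j ∈ Finset.Icc 1 p, z j =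
      1 - (1 + (r j : ℝ) + 2 * ∑ k ∈ Finset.Icc 1 (j - 1), (r k : ℝ)) / ((N : ℝ) - 1)) :
    -2 * Real.log 2
      - ∑ j ∈ Finset.Icc 1 p, (r j : ℝ) *
          (Real.log 4 + (1 / 2) * Real.log (1 - z j ^ 2) + Real.log (r j))
      - ∑ j ∈ Finset.Icc 1 p, ∑ k ∈ Finset.Icc 1 p,
          (r j : ℝ) * (r k : ℝ) * ((1 / 2) * Real.log (1 - z j * z k + |z j - z k|))
      = -((N : ℝ) - 1) * Real.log 4
        - ∑ j ∈ Finset.Icc 1 p, (r j : ℝ) * Real.log (r j)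
        - ((N : ℝ) - 1) * ∑ j ∈ Finset.Icc 1 p,
            (r j : ℝ) * (1 - z j) * Real.log (1 - z j) := by
  set F : Finset ℕ := Finset.Icc 1 p with hF
  set n : ℝ := (N : ℝ) - 1 with hndef
  set S : ℕ → ℝ := fun j => ∑ k ∈ Finset.Icc 1 (j - 1), (r k : ℝ) with hS
  set T : ℕ → ℝ := fun j => ∑ k ∈ Finset.Icc (j + 1) p, (r k : ℝ) with hT
  -- basic facts
  have hr1 : ∀ j ∈ F, (1 : ℝ) ≤ (r j : ℝ) := by
    intro j hj; exact_mod_cast hr j hj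
  have hSnn : ∀ j, 0 ≤ S j := by
    intro j; apply Finset.sum_nonneg; intro k _; positivity
  have hTnn : ∀ j, 0 ≤ T j := by
    intro j; apply Finset.sum_nonneg; intro k _; positivity
  have hn : n = 1 + ∑ j ∈ F, (r j : ℝ) := by
    rw [hndef, hN]; push_cast; ring
  have hnpos : 0 < n := by
    rw [hn]
    have : (0:ℝ) ≤ ∑ j ∈ F, (r j : ℝ) := Finset.sum_nonneg fun k _ => by positivity
    linarith
  have hn0 : n ≠ 0 := ne_of_gt hnpos
  -- splitting the full sum at j
  have hSTn : ∀ j ∈ F, S j + (r j : ℝ) + T j = n - 1 := by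
    intro j hj
    simp only [hF, Finset.mem_Icc] at hj
    have h1 := split_sum p j hj.2 (fun k => (r k : ℝ))
    have h2 := sum_Icc_split_top j hj.1 (fun k => (r k : ℝ))
    rw [hn]
    simp only [hF]
    rw [h1, h2]
    simp only [hS, hT]
    ring
  -- 1 - z and 1 + z formulas
  have h1mz : ∀ j ∈ F, 1 - z j = (1 + (r j : ℝ) + 2 * S j) / n := by
    intro j hj
    rw [hz j hj]
    ring
  have h1mzpos : ∀ j ∈ F, 0 < 1 - z j := by
    intro j hj
    rw [h1mz j hj]
    have := hr1 j hj
    have := hSnn j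
    positivity
  have h1pz : ∀ j ∈ F, 1 + z j = (1 + (r j : ℝ) + 2 * T j) / n := by
    intro j hj
    have h := h1mz j hj
    have h2 := hSTn j hj
    have : z j = 1 - (1 + (r j : ℝ) + 2 * S j) / n := by linarith
    rw [this]
    field_simp
    ring_nf
    nlinarith [h2]
  have h1pzpos : ∀ j ∈ F, 0 < 1 + z j := by
    intro j hj
    rw [h1pz j hj]
    have := hr1 j hj
    have := hTnn j
    positivity
  -- symmetry of r on F
  have hrsym : ∀ j ∈ F, (r (p + 1 - j) : ℝ) = (r j : ℝ) := by
    intro j hj; rw [← hsym j hj]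
  have hmemrefl : ∀ j ∈ F, p + 1 - j ∈ F := by
    intro j hj; simp only [hF, Finset.mem_Icc] at hj ⊢; omega
  -- S (p+1-j) = T j
  have hSrefl : ∀ j ∈ F, S (p + 1 - j) = T j := by
    intro j hj
    simp only [hF, Finset.mem_Icc] at hj
    simp only [hS, hT]
    rw [show p + 1 - j - 1 = p - j by omega]
    rw [reflect_gen p 1 (p - j) le_rfl (by omega) (fun k => (r k : ℝ))]
    rw [show p + 1 - (p - j) = j + 1 by omega, show p + 1 - 1 = p by omega]
    apply Finset.sum_congr rfl
    intro k hk
    simp only [Finset.mem_Icc] at hk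
    have hkF : k ∈ F := by simp only [hF, Finset.mem_Icc]; omega
    rw [← hsym k hkF]
  -- symmetry of z
  have hzsym : ∀ j ∈ F, z (p + 1 - j) = - z j := by
    intro j hj
    have h1 := h1mz (p + 1 - j) (hmemrefl j hj)
    rw [hrsym j hj, hSrefl j hj] at h1
    have h2 := h1pz j hj
    linarith
  -- monotonicity: z strictly decreasing on F
  have hmono : ∀ j ∈ F, ∀ k ∈ F, j < k → z k < z j := by
    intro j hj k hk hjk
    have h1 := h1mz j hj
    have h2 := h1mz k hk
    have hSS : S j + (r j : ℝ) ≤ S k := by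
      simp only [hF, Finset.mem_Icc] at hj hk
      have hsub : Finset.Icc 1 j ⊆ Finset.Icc 1 (k - 1) := by
        apply Finset.Icc_subset_Icc le_rfl; omega
      have hle := Finset.sum_le_sum_of_subset_of_nonneg (f := fun i => (r i : ℝ)) hsub
        (fun i _ _ => Nat.cast_nonneg _)
      have h3 := sum_Icc_split_top j hj.1 (fun k => (r k : ℝ))
      simp only [hS]
      calc (∑ i ∈ Finset.Icc 1 (j-1), (r i : ℝ)) + (r j : ℝ)
          = ∑ i ∈ Finset.Icc 1 j, (r i : ℝ) := h3.symm
        _ ≤ ∑ i ∈ Finset.Icc 1 (k-1), (r i : ℝ) := hle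
    have hrj := hr1 j hj
    have hrk := hr1 k hk
    have hdiff : (0:ℝ) < ((1 + (r k : ℝ) + 2 * S k) - (1 + (r j : ℝ) + 2 * S j)) / n :=
      div_pos (by nlinarith) hnpos
    rw [sub_div] at hdiff
    linarith
  -- Claim A
  have hClaimA : ∑ j ∈ F, (r j : ℝ) * Real.log (1 + z j)
      = ∑ j ∈ F, (r j : ℝ) * Real.log (1 - z j) := by
    rw [hF, reflect_full p (fun j => (r j : ℝ) * Real.log (1 + z j))]
    apply Finset.sum_congr rfl
    intro j hj
    have hjF : j ∈ F := by rw [hF]; exact hj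
    rw [hrsym j hjF, hzsym j hjF]
    ring_nf
  -- pointwise log identity for the double sum
  have hlog2 : ∀ j ∈ F, ∀ k ∈ F, Real.log (1 - z j * z k + |z j - z k|)
      = Real.log (1 + z (min j k)) + Real.log (1 - z (max j k)) := by
    intro j hj k hk
    rcases lt_trichotomy j k with h | h | h
    · have hz' := hmono j hj k hk h
      rw [show min j k = j by omega, show max j k = k by omega]
      rw [show |z j - z k| = z j - z k from abs_of_pos (by linarith)]
      rw [show 1 - z j * z k + (z j - z k) = (1 + z j) * (1 - z k) by ring,
        Real.log_mul (ne_of_gt (h1pzpos j hj)) (ne_of_gt (h1mzpos k hk))]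
    · subst h
      rw [show min j j = j by omega, show max j j = j by omega]
      rw [sub_self, abs_zero]
      rw [show 1 - z j * z j + 0 = (1 + z j) * (1 - z j) by ring,
        Real.log_mul (ne_of_gt (h1pzpos j hj)) (ne_of_gt (h1mzpos j hj))]
    · have hz' := hmono k hk j hj h
      rw [show min j k = k by omega, show max j k = j by omega]
      rw [show |z j - z k| = z k - z j from by rw [abs_sub_comm]; exact abs_of_pos (by linarith)]
      rw [show 1 - z j * z k + (z k - z j) = (1 + z k) * (1 - z j) by ring,
        Real.log_mul (ne_of_gt (h1pzpos k hk)) (ne_of_gt (h1mzpos j hj))]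
  -- Claim C
  have hClaimC : ∑ j ∈ F, ∑ k ∈ F, (r j:ℝ)*(r k:ℝ)*Real.log (1 + z (min j k))
      = ∑ j ∈ F, ∑ k ∈ F, (r j:ℝ)*(r k:ℝ)*Real.log (1 - z (max j k)) := by
    rw [hF, reflect_full2 p (fun j k => (r j:ℝ)*(r k:ℝ)*Real.log (1 + z (min j k)))]
    apply Finset.sum_congr rfl
    intro j hj
    apply Finset.sum_congr rfl
    intro k hk
    have hjF : j ∈ F := by rw [hF]; exact hj
    have hkF : k ∈ F := by rw [hF]; exact hk
    simp only [Finset.mem_Icc] at hj hk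
    have hmaxF : max j k ∈ F := by rw [hF]; simp only [Finset.mem_Icc]; omega
    rw [hrsym j hjF, hrsym k hkF,
      show min (p+1-j) (p+1-k) = p+1 - max j k by omega,
      hzsym (max j k) hmaxF]
    ring_nf
  -- Claim D
  have hClaimD : ∑ j ∈ F, ∑ k ∈ F, (r j:ℝ)*(r k:ℝ)*Real.log (1 - z (max j k))
      = ∑ j ∈ F, (r j:ℝ) * ((r j:ℝ) + 2 * S j) * Real.log (1 - z j) := by
    have inner : ∀ j ∈ Finset.Icc 1 p,
        ∑ k ∈ Finset.Icc 1 p, (r j:ℝ)*(r k:ℝ)*Real.log (1 - z (max j k))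
        = (r j:ℝ) * (S j + (r j:ℝ)) * Real.log (1 - z j)
          + ∑ k ∈ Finset.Icc (j+1) p, (r j:ℝ)*(r k:ℝ)*Real.log (1 - z k) := by
      intro j hj
      simp only [Finset.mem_Icc] at hj
      rw [split_sum p j hj.2 (fun k => (r j:ℝ)*(r k:ℝ)*Real.log (1 - z (max j k)))]
      congr 1
      · have e : ∀ k ∈ Finset.Icc 1 j, (r j:ℝ)*(r k:ℝ)*Real.log (1 - z (max j k))
            = (r k:ℝ) * ((r j:ℝ) * Real.log (1 - z j)) := by
          intro k hk
          simp only [Finset.mem_Icc] at hk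
          rw [show max j k = j by omega]
          ring
        rw [Finset.sum_congr rfl e, ← Finset.sum_mul,
          sum_Icc_split_top j hj.1 (fun k => (r k:ℝ))]
        simp only [hS]
        ring
      · apply Finset.sum_congr rfl
        intro k hk
        simp only [Finset.mem_Icc] at hk
        rw [show max j k = k by omega]
    rw [hF, Finset.sum_congr rfl inner, Finset.sum_add_distrib]
    rw [tri_swap p (fun j k => (r j:ℝ)*(r k:ℝ)*Real.log (1 - z k))]
    have inner2 : ∀ k ∈ Finset.Icc 1 p,
        ∑ j ∈ Finset.Icc 1 (k-1), (r j:ℝ)*(r k:ℝ)*Real.log (1 - z k)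
        = S k * ((r k:ℝ) * Real.log (1 - z k)) := by
      intro k hk
      have e : ∀ j ∈ Finset.Icc 1 (k-1), (r j:ℝ)*(r k:ℝ)*Real.log (1 - z k)
          = (r j:ℝ) * ((r k:ℝ) * Real.log (1 - z k)) := fun j _ => by ring
      rw [Finset.sum_congr rfl e, ← Finset.sum_mul]
    rw [Finset.sum_congr rfl inner2, ← Finset.sum_add_distrib]
    apply Finset.sum_congr rfl
    intro j hj
    ring
  -- Term 1
  have hTerm1 : ∑ j ∈ F, (r j : ℝ) *
        (Real.log 4 + (1 / 2) * Real.log (1 - z j ^ 2) + Real.log (r j))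
      = (n - 1) * Real.log 4 + (∑ j ∈ F, (r j : ℝ) * Real.log (1 - z j))
        + ∑ j ∈ F, (r j : ℝ) * Real.log (r j) := by
    have step : ∀ j ∈ F, (r j : ℝ) *
          (Real.log 4 + (1 / 2) * Real.log (1 - z j ^ 2) + Real.log (r j))
        = (r j : ℝ) * Real.log 4
          + (1/2) * ((r j : ℝ) * Real.log (1 - z j) + (r j : ℝ) * Real.log (1 + z j))
          + (r j : ℝ) * Real.log (r j) := by
      intro j hj
      rw [show (1 : ℝ) - z j ^ 2 = (1 - z j) * (1 + z j) by ring,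
        Real.log_mul (ne_of_gt (h1mzpos j hj)) (ne_of_gt (h1pzpos j hj))]
      ring
    rw [Finset.sum_congr rfl step, Finset.sum_add_distrib, Finset.sum_add_distrib,
      ← Finset.sum_mul, ← Finset.mul_sum, Finset.sum_add_distrib, hClaimA]
    rw [hn]
    ring
  -- Term 2
  have hTerm2 : ∑ j ∈ F, ∑ k ∈ F,
        (r j : ℝ) * (r k : ℝ) * ((1 / 2) * Real.log (1 - z j * z k + |z j - z k|))
      = ∑ j ∈ F, (r j:ℝ) * ((r j:ℝ) + 2 * S j) * Real.log (1 - z j) := by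
    have step : ∀ j ∈ F, ∑ k ∈ F,
          (r j : ℝ) * (r k : ℝ) * ((1 / 2) * Real.log (1 - z j * z k + |z j - z k|))
        = (1/2) * ((∑ k ∈ F, (r j:ℝ)*(r k:ℝ)*Real.log (1 + z (min j k)))
            + ∑ k ∈ F, (r j:ℝ)*(r k:ℝ)*Real.log (1 - z (max j k))) := by
      intro j hj
      rw [← Finset.sum_add_distrib, Finset.mul_sum]
      apply Finset.sum_congr rfl
      intro k hk
      rw [hlog2 j hj k hk]
      ring
    rw [Finset.sum_congr rfl step, ← Finset.mul_sum, Finset.sum_add_distrib, hClaimC,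
      hClaimD]
    ring
  -- key pointwise identity
  have hSum : (∑ j ∈ F, (r j:ℝ) * Real.log (1 - z j))
        + ∑ j ∈ F, (r j:ℝ) * ((r j:ℝ) + 2 * S j) * Real.log (1 - z j)
      = n * ∑ j ∈ F, (r j : ℝ) * (1 - z j) * Real.log (1 - z j) := by
    rw [← Finset.sum_add_distrib, Finset.mul_sum]
    apply Finset.sum_congr rfl
    intro j hj
    have h := h1mz j hj
    have hzn : n * (1 - z j) = 1 + (r j : ℝ) + 2 * S j := by
      rw [h]; field_simp
    have : (r j:ℝ) * Real.log (1 - z j) + (r j:ℝ) * ((r j:ℝ) + 2 * S j) * Real.log (1 - z j)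
        = (r j:ℝ) * (n * (1 - z j)) * Real.log (1 - z j) := by
      rw [hzn]; ring
    rw [this]; ring
  have h4 : Real.log 4 = 2 * Real.log 2 := by
    rw [show (4:ℝ) = 2^2 by norm_num, Real.log_pow]
    push_cast; ring
  rw [h4] at hTerm1 ⊢
  rw [hTerm1, hTerm2]
  linarith [hSum]
end
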